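/- arXiv:1412.8567 — 5 statements merged into one kernel-verified Lean document; each statement's English description precedes it below -/
import Mathlib

section
/- Let (a(n)) be a sequence of real numbers satisfying: (i) a(n) = O(n^α); (ii) ∑_{n≤x} a(n) = O(x^β); (iii) ∑_{n≤x} a(n)² = cx + O(x^γ), with α, β, γ ≥ 0 and c > 0. If α + β < 1, then for any r with max{α+β, γ} < r < 1 and all sufficiently large x, the sequence (a(n)) has at least one sign change for n ∈ [x, x + x^r]; that is, there exist m, n ∈ [x, x+x^r] with a(m) > 0 and a(n) < 0. -/
/-!
If `a` kept a constant sign on `(x, x + x^r]`, then `∑ a(n)² ≤ max |a(n)| · |∑ a(n)|` there, and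
by (i) and (ii) this is `O(x^α) · O(x^β)`. But by (iii) the same sum is `c x^r + O(x^γ)`, which is
impossible for large `x` as `r > max (α + β) γ`.
-/

open Filter Real Finset Topology

lemma eventually_mul_rpow_add_mul_rpow_lt {γ δ r c : ℝ} (hγ : γ < r) (hδ : δ < r) (hc : 0 < c)
    (A B : ℝ) : ∀ᶠ x in atTop, A * x ^ γ + B * x ^ δ < c * x ^ r := by
  have hlim : Tendsto (fun x : ℝ => A * x ^ (-(r - γ)) + B * x ^ (-(r - δ))) atTop (𝓝 0) := by
    simpa using ((tendsto_rpow_neg_atTop (sub_pos.2 hγ)).const_mul A).add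
      ((tendsto_rpow_neg_atTop (sub_pos.2 hδ)).const_mul B)
  filter_upwards [hlim.eventually (gt_mem_nhds hc), eventually_gt_atTop 0] with x hx hx0
  have hsplit : ∀ ε, x ^ ε = x ^ (-(r - ε)) * x ^ r := fun ε => by
    rw [← rpow_add hx0]; ring_nf
  rw [hsplit γ, hsplit δ]
  nlinarith [rpow_pos_of_pos hx0 r]

lemma mul_rpow_le_abs_mul_two_rpow_mul_rpow {C γ t x : ℝ} (hγ : 0 ≤ γ) (ht : 0 ≤ t)
    (htx : t ≤ 2 * x) : C * t ^ γ ≤ |C| * 2 ^ γ * x ^ γ := by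
  calc C * t ^ γ ≤ |C| * t ^ γ := mul_le_mul_of_nonneg_right (le_abs_self C) (by positivity)
    _ ≤ |C| * (2 * x) ^ γ := by gcongr
    _ = |C| * 2 ^ γ * x ^ γ := by rw [mul_rpow zero_le_two (by linarith), mul_assoc]

lemma sum_Icc_one_sub_sum_Icc_one {M : Type*} [AddCommGroup M] (f : ℕ → M) {m n : ℕ}
    (hmn : m ≤ n) : ∑ k ∈ Icc 1 n, f k - ∑ k ∈ Icc 1 m, f k = ∑ k ∈ Ioc m n, f k := by
  rw [sub_eq_iff_eq_add', ← zero_add 1, Icc_add_one_left_eq_Ioc, Icc_add_one_left_eq_Ioc,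
    sum_Ioc_consecutive f m.zero_le hmn]

lemma Nat.mem_Ioc_floor_floor_iff {x y : ℝ} (hx : 0 ≤ x) (hy : 0 ≤ y) {n : ℕ} :
    n ∈ Ioc ⌊x⌋₊ ⌊y⌋₊ ↔ x < n ∧ (n : ℝ) ≤ y := by
  rw [mem_Ioc, Nat.floor_lt hx, Nat.le_floor_iff hy]

lemma abs_sum_eq_sum_abs_of_no_sign_change {ι : Type*} {s : Finset ι} {f : ι → ℝ}
    (h : ∀ i ∈ s, ∀ j ∈ s, 0 < f i → 0 ≤ f j) : |∑ i ∈ s, f i| = ∑ i ∈ s, |f i| := by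
  by_cases hpos : ∃ i ∈ s, 0 < f i
  · obtain ⟨i, hi, hfi⟩ := hpos
    have hnonneg : ∀ j ∈ s, 0 ≤ f j := fun j hj => h i hi j hj hfi
    rw [abs_sum_of_nonneg hnonneg]
    exact sum_congr rfl fun j hj => (abs_of_nonneg (hnonneg j hj)).symm
  · push Not at hpos
    rw [← abs_neg, ← sum_neg_distrib, abs_sum_of_nonneg fun j hj => neg_nonneg.2 (hpos j hj)]
    exact sum_congr rfl fun j hj => (abs_of_nonpos (hpos j hj)).symm

lemma sum_sq_le_mul_abs_sum_of_no_sign_change {ι : Type*} {s : Finset ι} {f : ι → ℝ} {M : ℝ}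
    (h : ∀ i ∈ s, ∀ j ∈ s, 0 < f i → 0 ≤ f j) (hM : ∀ i ∈ s, |f i| ≤ M) :
    ∑ i ∈ s, f i ^ 2 ≤ M * |∑ i ∈ s, f i| := by
  rw [abs_sum_eq_sum_abs_of_no_sign_change h, mul_sum]
  refine sum_le_sum fun i hi => ?_
  rw [← sq_abs, sq]
  exact mul_le_mul_of_nonneg_right (hM i hi) (abs_nonneg _)

lemma abs_sum_Ioc_floor_sub_le {f : ℕ → ℝ} {g : ℝ → ℝ} {C γ x y : ℝ} (hγ : 0 ≤ γ)
    (hf : ∀ t, 1 ≤ t → |∑ n ∈ Icc 1 ⌊t⌋₊, f n - g t| ≤ C * t ^ γ)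
    (hx : 1 ≤ x) (hxy : x ≤ y) (hy : y ≤ 2 * x) :
    |∑ n ∈ Ioc ⌊x⌋₊ ⌊y⌋₊, f n - (g y - g x)| ≤ 2 * (|C| * 2 ^ γ * x ^ γ) := by
  rw [← sum_Icc_one_sub_sum_Icc_one f (Nat.floor_le_floor hxy)]
  have hCy := mul_rpow_le_abs_mul_two_rpow_mul_rpow (C := C) hγ (by linarith) hy
  have hCx := mul_rpow_le_abs_mul_two_rpow_mul_rpow (C := C) hγ (by linarith)
    (by linarith : x ≤ 2 * x)
  calc _ = |(∑ n ∈ Icc 1 ⌊y⌋₊, f n - g y) - (∑ n ∈ Icc 1 ⌊x⌋₊, f n - g x)| := by ring_nf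
    _ ≤ |∑ n ∈ Icc 1 ⌊y⌋₊, f n - g y| + |∑ n ∈ Icc 1 ⌊x⌋₊, f n - g x| := abs_sub _ _
    _ ≤ C * y ^ γ + C * x ^ γ := add_le_add (hf y (by linarith)) (hf x hx)
    _ ≤ 2 * (|C| * 2 ^ γ * x ^ γ) := by linarith

lemma sum_sq_Ioc_floor_le_of_no_sign_change {a : ℕ → ℝ} {α β C₁ C₂ x y : ℝ}
    (hα : 0 ≤ α) (hβ : 0 ≤ β) (h1 : ∀ n : ℕ, 1 ≤ n → |a n| ≤ C₁ * (n : ℝ) ^ α)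
    (h2 : ∀ t : ℝ, 1 ≤ t → |∑ n ∈ Icc 1 ⌊t⌋₊, a n| ≤ C₂ * t ^ β)
    (hx : 1 ≤ x) (hxy : x ≤ y) (hy : y ≤ 2 * x)
    (hsign : ∀ m ∈ Ioc ⌊x⌋₊ ⌊y⌋₊, ∀ n ∈ Ioc ⌊x⌋₊ ⌊y⌋₊, 0 < a m → 0 ≤ a n) :
    ∑ n ∈ Ioc ⌊x⌋₊ ⌊y⌋₊, a n ^ 2 ≤ |C₁| * 2 ^ α * (2 * (|C₂| * 2 ^ β)) * x ^ (α + β) := by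
  have hbound : ∀ n ∈ Ioc ⌊x⌋₊ ⌊y⌋₊, |a n| ≤ |C₁| * 2 ^ α * x ^ α := fun n hn => by
    obtain ⟨hxn, hny⟩ := (Nat.mem_Ioc_floor_floor_iff (by linarith) (by linarith)).1 hn
    exact (h1 n (Nat.one_le_cast.mp (hx.trans hxn.le))).trans
      (mul_rpow_le_abs_mul_two_rpow_mul_rpow hα n.cast_nonneg (by linarith))
  have hsum := abs_sum_Ioc_floor_sub_le (g := 0) hβ (by simpa using h2) hx hxy hy
  simp only [Pi.zero_apply, sub_zero] at hsum
  calc _ ≤ |C₁| * 2 ^ α * x ^ α * |∑ n ∈ Ioc ⌊x⌋₊ ⌊y⌋₊, a n| :=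
        sum_sq_le_mul_abs_sum_of_no_sign_change hsign hbound
    _ ≤ |C₁| * 2 ^ α * x ^ α * (2 * (|C₂| * 2 ^ β * x ^ β)) := by gcongr
    _ = _ := by rw [rpow_add (by linarith)]; ring

theorem sign_change_in_short_interval_general
    (a : ℕ → ℝ) (α β γ c r : ℝ)
    (hα : 0 ≤ α) (hβ : 0 ≤ β) (hγ : 0 ≤ γ) (hc : 0 < c)
    (h1 : ∃ C : ℝ, ∀ n : ℕ, 1 ≤ n → |a n| ≤ C * (n : ℝ) ^ α)
    (h2 : ∃ C : ℝ, ∀ x : ℝ, 1 ≤ x → |∑ n ∈ Finset.Icc 1 ⌊x⌋₊, a n| ≤ C * x ^ β)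
    (h3 : ∃ C : ℝ, ∀ x : ℝ, 1 ≤ x →
      |(∑ n ∈ Finset.Icc 1 ⌊x⌋₊, (a n) ^ 2) - c * x| ≤ C * x ^ γ)
    (hr1 : max (α + β) γ < r) (hr2 : r < 1) :
    ∃ X : ℝ, ∀ x : ℝ, X ≤ x →
      ∃ m n : ℕ, ((x : ℝ) ≤ m ∧ (m : ℝ) ≤ x + x ^ r) ∧
        ((x : ℝ) ≤ n ∧ (n : ℝ) ≤ x + x ^ r) ∧ 0 < a m ∧ a n < 0 := by
  obtain ⟨C₁, hC₁⟩ := h1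
  obtain ⟨C₂, hC₂⟩ := h2
  obtain ⟨C₃, hC₃⟩ := h3
  obtain ⟨hαβr, hγr⟩ := max_lt_iff.mp hr1
  obtain ⟨X, hX⟩ := eventually_atTop.mp <| (eventually_ge_atTop 1).and <|
    eventually_mul_rpow_add_mul_rpow_lt hγr hαβr hc
      (2 * (|C₃| * 2 ^ γ)) (|C₁| * 2 ^ α * (2 * (|C₂| * 2 ^ β)))
  refine ⟨X, fun x hxX => ?_⟩
  obtain ⟨hx, hlt⟩ := hX x hxX
  by_contra! hcon
  set y := x + x ^ r
  have hxr : x ^ r ≤ x := by simpa using rpow_le_rpow_of_exponent_le hx hr2.le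
  have hxy : x ≤ y := by linarith [rpow_nonneg (zero_le_one.trans hx) r]
  have hy : y ≤ 2 * x := by linarith
  have hmem : ∀ n ∈ Ioc ⌊x⌋₊ ⌊y⌋₊, x ≤ n ∧ (n : ℝ) ≤ y := fun n hn => by
    rw [Nat.mem_Ioc_floor_floor_iff (by linarith) (by linarith)] at hn
    exact ⟨hn.1.le, hn.2⟩
  have hupper := sum_sq_Ioc_floor_le_of_no_sign_change hα hβ hC₁ hC₂ hx hxy hy
    fun m hm n hn => hcon m n (hmem m hm) (hmem n hn)
  have hlower := (abs_le.mp (abs_sum_Ioc_floor_sub_le hγ hC₃ hx hxy hy)).1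
  linarith

/-- Sign-change criterion: under O-bounds on `a`, its partial sums and partial sums of
squares (with positive mean), every interval `[x, x + x^r]` with
`max (α+β) γ < r < 1` contains a sign change for all sufficiently large `x`. -/
theorem sign_change_in_short_interval
    (a : ℕ → ℝ) (α β γ c r : ℝ)
    (hα : 0 ≤ α) (hβ : 0 ≤ β) (hγ : 0 ≤ γ) (hc : 0 < c)
    (h1 : ∃ C : ℝ, ∀ n : ℕ, 1 ≤ n → |a n| ≤ C * (n : ℝ) ^ α)
    (h2 : ∃ C : ℝ, ∀ x : ℝ, 1 ≤ x → |∑ n ∈ Finset.Icc 1 ⌊x⌋₊, a n| ≤ C * x ^ β)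
    (h3 : ∃ C : ℝ, ∀ x : ℝ, 1 ≤ x →
      |(∑ n ∈ Finset.Icc 1 ⌊x⌋₊, (a n) ^ 2) - c * x| ≤ C * x ^ γ)
    (hab : α + β < 1) (hr1 : max (α + β) γ < r) (hr2 : r < 1) :
    ∃ X : ℝ, ∀ x : ℝ, X ≤ x →
      ∃ m n : ℕ, ((x : ℝ) ≤ m ∧ (m : ℝ) ≤ x + x ^ r) ∧
        ((x : ℝ) ≤ n ∧ (n : ℝ) ≤ x + x ^ r) ∧ 0 < a m ∧ a n < 0 :=
  sign_change_in_short_interval_general a α β γ c r hα hβ hγ hc h1 h2 h3 hr1 hr2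
end

section
/- Let f(s) = ∑_{n≥1} r(n) n^{-s} be a Dirichlet series with nonnegative real coefficients r(n), and suppose f(s) = g(s)·L(s), where g(s) = ∑ c(n) n^{-s} is absolutely convergent for Re(s) > 1/2, and L(s) = ∑ b(n) n^{-s} with b(n) ≥ 0 converges for Re(s) > 1, extends meromorphically with a simple pole at s = 1, and g(1) = 0. Then by Landau's theorem f converges for Re(s) > σ₀ for some σ₀ ≤ 1/2, and hence ∑_{n≥1} r(n)/n converges. Conclude: if additionally ∑_n r(n)/n diverges, then g(1) ≠ 0. -/
/-!
Because `g(1) = 0` cancels the simple pole of `L` at `1`, the product `g · L` has a finite limit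
as `s → 1`. For real `σ > 1` this product is the Dirichlet series `∑ r(n) n^{-σ}` with nonnegative
terms, so its partial sums at `σ = 1` stay bounded and `∑ r(n)/n` converges.
-/

open Filter Topology Complex LSeries
open scoped LSeries.notation

theorem summable_of_tendsto_of_tsum_le {ι : Type*} {l : Filter ι} [l.NeBot]
    {F : ι → ℕ → ℝ} {f : ℕ → ℝ} {M : ℝ} (hF : ∀ i n, 0 ≤ F i n)
    (hlim : ∀ n, Tendsto (F · n) l (𝓝 (f n)))
    (hbound : ∀ᶠ i in l, Summable (F i) ∧ ∑' n, F i n ≤ M) : Summable f := by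
  have hf : ∀ n, 0 ≤ f n := fun n => ge_of_tendsto' (hlim n) fun i => hF i n
  refine summable_of_sum_range_le (c := M) hf fun N =>
    le_of_tendsto (tendsto_finsetSum _ fun n _ => hlim n) ?_
  filter_upwards [hbound] with i ⟨hsum, hle⟩
  exact (hsum.sum_le_tsum _ fun n _ => hF i n).trans hle

theorem continuousAt_div_natCast_rpow (a : ℝ) (n : ℕ) {x : ℝ} (hx : x ≠ 0) :
    ContinuousAt (fun σ : ℝ => a / (n : ℝ) ^ σ) x := by
  simp_rw [div_eq_mul_inv, ← Real.rpow_neg n.cast_nonneg]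
  exact continuousAt_const.mul
    ((Real.continuousAt_const_rpow' (neg_ne_zero.mpr hx)).comp continuousAt_neg)

theorem tendsto_ofReal_nhdsGT_nhdsNE (x : ℝ) :
    Tendsto (fun σ : ℝ => (σ : ℂ)) (𝓝[>] x) (𝓝[≠] (x : ℂ)) :=
  continuous_ofReal.continuousWithinAt.tendsto_nhdsWithin fun _ hσ =>
    ofReal_injective.ne (ne_of_gt hσ)

theorem tendsto_mul_nhdsNE_of_zero_of_simple_pole {𝕜 : Type*} [NontriviallyNormedField 𝕜]
    {f g : 𝕜 → 𝕜} {z R : 𝕜} (hf : DifferentiableAt 𝕜 f z) (hfz : f z = 0)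
    (hg : ContinuousAt (fun s => g s - R / (s - z)) z) :
    Tendsto (fun s => f s * g s) (𝓝[≠] z) (𝓝 (R * deriv f z)) := by
  have hslope : Tendsto (fun s => f s / (s - z)) (𝓝[≠] z) (𝓝 (deriv f z)) := by
    refine (hasDerivAt_iff_tendsto_slope.mp hf.hasDerivAt).congr' ?_
    filter_upwards [self_mem_nhdsWithin] with s hs
    rw [slope_def_field, hfz, sub_zero]
  have key := ((hf.continuousAt.tendsto.mul hg.tendsto).mono_left nhdsWithin_le_nhds).add
    (hslope.const_mul R)
  rw [hfz, zero_mul, zero_add] at key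
  refine key.congr' ?_
  filter_upwards [self_mem_nhdsWithin] with s hs
  have : s - z ≠ 0 := sub_ne_zero.mpr hs
  field_simp
  ring

namespace LSeries

theorem term_ofReal_ofReal {f : ℕ → ℝ} {x : ℝ} (hx : x ≠ 0) (n : ℕ) :
    term (fun n => (f n : ℂ)) x n = ((f n / (n : ℝ) ^ x : ℝ) : ℂ) := by
  rcases eq_or_ne n 0 with rfl | hn
  · simp [Real.zero_rpow hx]
  · rw [term_of_ne_zero hn, ofReal_div, ofReal_cpow n.cast_nonneg, ofReal_natCast]

theorem abscissaOfAbsConv_ofReal_le {f : ℕ → ℝ} {a : ℝ}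
    (h : ∀ σ : ℝ, a < σ → Summable fun n => |f n| / (n : ℝ) ^ σ) :
    abscissaOfAbsConv (fun n => (f n : ℂ)) ≤ a := by
  refine abscissaOfAbsConv_le_of_forall_lt_LSeriesSummable fun σ hσ =>
    .of_norm ((h σ (mod_cast hσ)).of_nonneg_of_le (fun n => norm_nonneg _) fun n => ?_)
  rw [norm_term_eq, ofReal_re]
  split_ifs
  · positivity
  · rw [norm_real, Real.norm_eq_abs]

theorem convolution_eq_sum_divisors {R : Type*} [Semiring R] (f g : ℕ → R) (n : ℕ) :
    (f ⍟ g) n = ∑ d ∈ n.divisors, f d * g (n / d) := by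
  rw [convolution_def, ← Nat.sum_divisorsAntidiagonal (fun x y => f x * g y)]

end LSeries

theorem LSeries_eq_tsum_div_cpow (f : ℕ → ℂ) {s : ℂ} (hs : s ≠ 0) :
    LSeries f s = ∑' n, f n / (n : ℂ) ^ s := by
  rw [LSeries, funext (term_of_ne_zero' hs f)]

theorem LSeries_ofReal_ofReal {f : ℕ → ℝ} {x : ℝ} (hx : x ≠ 0) :
    LSeries (fun n => (f n : ℂ)) x = ((∑' n, f n / (n : ℝ) ^ x : ℝ) : ℂ) := by
  rw [LSeries, funext (term_ofReal_ofReal hx), ofReal_tsum]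

theorem LSeriesSummable_ofReal_ofReal_iff {f : ℕ → ℝ} {x : ℝ} (hx : x ≠ 0) :
    LSeriesSummable (fun n => (f n : ℂ)) x ↔ Summable fun n => f n / (n : ℝ) ^ x := by
  rw [LSeriesSummable, funext (term_ofReal_ofReal hx), summable_ofReal]

theorem LSeriesHasSum.of_eq_sum_divisors {f g h : ℕ → ℂ} {s a b : ℂ}
    (hfgh : ∀ n ≠ 0, h n = ∑ d ∈ n.divisors, f d * g (n / d))
    (hf : LSeriesHasSum f s a) (hg : LSeriesHasSum g s b) : LSeriesHasSum h s (a * b) :=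
  (LSeriesHasSum_congr s _ fun hn => by rw [convolution_eq_sum_divisors, hfgh _ hn]).mp
    (hf.convolution hg)

theorem summable_div_rpow_of_LSeriesHasSum_of_tendsto {r : ℕ → ℝ} (hr : ∀ n, 0 ≤ r n)
    {a : ℝ} (ha : 0 < a) {F : ℂ → ℂ} {A : ℂ}
    (hF : ∀ σ : ℝ, a < σ → LSeriesHasSum (fun n => (r n : ℂ)) σ (F σ))
    (hlim : Tendsto (fun σ : ℝ => F σ) (𝓝[>] a) (𝓝 A)) :
    Summable fun n => r n / (n : ℝ) ^ a := by
  have hre : Tendsto (fun σ : ℝ => ∑' n, r n / (n : ℝ) ^ σ) (𝓝[>] a) (𝓝 A.re) := by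
    refine ((continuous_re.tendsto _).comp hlim).congr' ?_
    filter_upwards [self_mem_nhdsWithin] with σ hσ
    rw [Function.comp_apply, ← (hF σ hσ).LSeries_eq,
      LSeries_ofReal_ofReal (ha.trans hσ).ne', ofReal_re]
  refine summable_of_tendsto_of_tsum_le (l := 𝓝[>] a) (F := fun σ n => r n / (n : ℝ) ^ σ)
    (M := A.re + 1)
    (fun σ n => div_nonneg (hr n) (Real.rpow_nonneg n.cast_nonneg σ))
    (fun n => (continuousAt_div_natCast_rpow (r n) n ha.ne').tendsto.mono_left
      nhdsWithin_le_nhds) ?_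
  filter_upwards [self_mem_nhdsWithin, hre.eventually (gt_mem_nhds (lt_add_one _))]
    with σ hσ hle
  exact ⟨(LSeriesSummable_ofReal_ofReal_iff (ha.trans hσ).ne').mp (hF σ hσ).LSeriesSummable,
    hle.le⟩

/-- Landau-type nonvanishing: let `r = c ⋆ b` have nonnegative coefficients, where
`g(s) = ∑ c n / n^s` is absolutely convergent for `Re s > 1/2` and `L(s) = ∑ b n / n^s`
(with `b n ≥ 0`) converges for `Re s > 1` and continues meromorphically to
`Re s > 1/2` with a simple pole at `s = 1`.  If `∑ r n / n` diverges, then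
`g(1) = ∑ c n / n ≠ 0`. -/
theorem landau_nonvanishing
    (r c b : ℕ → ℝ)
    (hr : ∀ n, 0 ≤ r n) (hbpos : ∀ n, 0 ≤ b n)
    (hconv : ∀ n : ℕ, 1 ≤ n → r n = ∑ d ∈ n.divisors, c d * b (n / d))
    (hg : ∀ σ : ℝ, 1 / 2 < σ → Summable (fun n : ℕ => |c n| / (n : ℝ) ^ σ))
    (hbconv : ∀ σ : ℝ, 1 < σ → Summable (fun n : ℕ => b n / (n : ℝ) ^ σ))
    (hL : ∃ (Lfun : ℂ → ℂ) (R : ℂ), R ≠ 0 ∧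
      AnalyticOnNhd ℂ (fun s => Lfun s - R / (s - 1)) {s : ℂ | 1 / 2 < s.re} ∧
      ∀ s : ℂ, 1 < s.re → Lfun s = ∑' n : ℕ, (b n : ℂ) / (n : ℂ) ^ s)
    (hdiv : ¬ Summable (fun n : ℕ => r n / n)) :
    (∑' n : ℕ, c n / (n : ℝ)) ≠ 0 := by
  intro h0
  obtain ⟨Lfun, R, -, hLa, hLeq⟩ := hL
  set G := LSeries (fun n => (c n : ℂ)) with hG
  have hc_abs := abscissaOfAbsConv_ofReal_le hg
  have hb_abs := abscissaOfAbsConv_ofReal_le (f := b) fun σ hσ => by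
    simpa only [abs_of_nonneg (hbpos _)] using hbconv σ hσ
  have hG_diff : DifferentiableAt ℂ G 1 :=
    (LSeries_hasDerivAt (hc_abs.trans_lt (mod_cast (by norm_num : (1 / 2 : ℝ) < 1))))
      |>.differentiableAt
  have hG_one : G 1 = 0 := by
    rw [hG, ← ofReal_one, LSeries_ofReal_ofReal one_ne_zero]
    simpa using h0
  have hr_sum (σ : ℝ) (hσ : 1 < σ) : LSeriesHasSum (fun n => (r n : ℂ)) σ (G σ * Lfun σ) := by
    have hσ' : 1 < (σ : ℂ).re := mod_cast hσ
    rw [hLeq σ hσ', ← LSeries_eq_tsum_div_cpow _ (ofReal_ne_zero.mpr (zero_lt_one.trans hσ).ne')]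
    refine .of_eq_sum_divisors (fun n hn => ?_)
      (LSeriesSummable_of_abscissaOfAbsConv_lt_re (hc_abs.trans_lt ?_)).LSeriesHasSum
      (LSeriesSummable_of_abscissaOfAbsConv_lt_re (hb_abs.trans_lt ?_)).LSeriesHasSum
    · rw [hconv n (Nat.one_le_iff_ne_zero.mpr hn)]
      push_cast
      rfl
    · exact mod_cast (by linarith : (1 / 2 : ℝ) < σ)
    · exact mod_cast hσ
  have hlim : Tendsto (fun σ : ℝ => G σ * Lfun σ) (𝓝[>] 1) (𝓝 (R * deriv G 1)) :=
    (tendsto_mul_nhdsNE_of_zero_of_simple_pole hG_diff hG_one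
      (hLa 1 (by norm_num)).continuousAt).comp (by simpa using tendsto_ofReal_nhdsGT_nhdsNE 1)
  exact hdiv <| by
    simpa using summable_div_rpow_of_LSeriesHasSum_of_tendsto
      (F := fun s => G s * Lfun s) hr one_pos hr_sum hlim
end

section
/- Let λ: ℕ → ℝ and a: ℕ → ℝ be arithmetic functions related by λ(n) = ∑_{d² m = n} μ(d) a(m) / d, where μ is the Möbius function. If |a(n)| ≤ d₄(n) for all n ≥ 1, then |λ(n)| ≤ d₅(n) for all n ≥ 1, where d_l(n) denotes the number of ways of writing n as an ordered product of l positive integers. -/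
/-
Since `|μ(d)/d| ≤ 1`, the bound `|a| ≤ d₄` gives `|λ(n)| ≤ ∑_{d² ∣ n} d₄(n/d²)`. The squares
`d²` dividing `n` are distinct divisors of `n`, so this is at most `∑_{e ∣ n} d₄(n/e) = d₅(n)`.
-/

/-- The `l`-fold divisor function `d_l(n)`: the number of ways of writing `n` as an
ordered product of `l` positive integers (defined by iterated Dirichlet convolution of
the constant function `1`). -/
def dFold : ℕ → ℕ → ℕ
  | 0, n => if n = 1 then 1 else 0
  | l + 1, n => ∑ d ∈ n.divisors, dFold l d

open ArithmeticFunction Finset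
open scoped ArithmeticFunction.Moebius

theorem dFold_succ_eq_sum_divisors_div (l n : ℕ) :
    (dFold (l + 1) n : ℝ) = ∑ e ∈ n.divisors, (dFold l (n / e) : ℝ) := by
  rw [Nat.sum_div_divisors n fun d => (dFold l d : ℝ), dFold]
  push_cast
  rfl

theorem abs_moebius_div_le_one (d : ℕ) : |(μ d : ℝ) / d| ≤ 1 := by
  rw [abs_div, Nat.abs_cast]
  rcases Nat.eq_zero_or_pos d with rfl | hd
  · simp
  · rw [div_le_one (by exact_mod_cast hd)]
    calc |(μ d : ℝ)| ≤ 1 := mod_cast abs_moebius_le_one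
      _ ≤ d := mod_cast hd

theorem sum_sq_dvd_le_sum_divisors {n : ℕ} (hn : n ≠ 0) (f : ℕ → ℝ) (hf : ∀ e, 0 ≤ f e) :
    ∑ d ∈ Icc 1 n, (if d ^ 2 ∣ n then f (d ^ 2) else 0) ≤ ∑ e ∈ n.divisors, f e := by
  rw [← sum_filter, ← sum_image fun x _ y _ h => Nat.pow_left_injective two_ne_zero h]
  refine sum_le_sum_of_subset_of_nonneg ?_ fun _ _ _ => hf _
  intro e he
  obtain ⟨d, hd, rfl⟩ := mem_image.mp he
  exact Nat.mem_divisors.mpr ⟨(mem_filter.mp hd).2, hn⟩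

/-- If `λ(n) = ∑_{d² m = n} μ(d) a(m) / d` and `|a(n)| ≤ d₄(n)`, then `|λ(n)| ≤ d₅(n)`. -/
theorem lambda_le_d5
    (lam a : ℕ → ℝ)
    (hrel : ∀ n : ℕ, 1 ≤ n → lam n =
      ∑ d ∈ Finset.Icc 1 n, if d ^ 2 ∣ n then
        ((ArithmeticFunction.moebius d : ℝ) / d) * a (n / d ^ 2) else 0)
    (ha : ∀ n : ℕ, 1 ≤ n → |a n| ≤ (dFold 4 n : ℝ)) :
    ∀ n : ℕ, 1 ≤ n → |lam n| ≤ (dFold 5 n : ℝ) := by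
  intro n hn
  have hn0 : n ≠ 0 := Nat.one_le_iff_ne_zero.mp hn
  have hterm : ∀ d, |if d ^ 2 ∣ n then (μ d : ℝ) / d * a (n / d ^ 2) else 0| ≤
      if d ^ 2 ∣ n then (dFold 4 (n / d ^ 2) : ℝ) else 0 := by
    intro d
    split_ifs with hdvd
    · have hquot : 1 ≤ n / d ^ 2 :=
        Nat.div_pos (Nat.le_of_dvd hn hdvd) (Nat.pos_of_dvd_of_pos hdvd hn)
      rw [abs_mul]
      simpa using mul_le_mul (abs_moebius_div_le_one d) (ha _ hquot) (abs_nonneg _) zero_le_one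
    · simp
  calc |lam n|
      ≤ ∑ d ∈ Icc 1 n, if d ^ 2 ∣ n then (dFold 4 (n / d ^ 2) : ℝ) else 0 := by
        rw [hrel n hn]
        exact (abs_sum_le_sum_abs _ _).trans (sum_le_sum fun d _ => hterm d)
    _ ≤ ∑ e ∈ n.divisors, (dFold 4 (n / e) : ℝ) :=
        sum_sq_dvd_le_sum_divisors hn0 (fun e => dFold 4 (n / e)) fun _ => Nat.cast_nonneg _
    _ = dFold 5 n := (dFold_succ_eq_sum_divisors_div 4 n).symm
end

section
/- Let (λ(n)) be a sequence of real numbers with: λ(n) ≪_ε n^ε for all ε > 0; ∑_{n≤x} λ(n) ≪_ε x^{3/5+ε}; and ∑_{n≤x} λ(n)² = cx + O_ε(x^{41/47+ε}) for some constant c > 0. Then for any r with 41/47 < r < 1 and sufficiently large x, the sequence (λ(n)) has at least one sign change for n ∈ [x, x+x^r], and the number of sign changes for n ≤ x is ≫ x^{1-r}. -/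
/-!
On an interval `(x, x + x^r]` with `r > 41/47`, the mean-square asymptotic gives
`∑ λ(n)² ≥ c x^r - O(x^{41/47+ε})`, while if `λ` had constant sign there, `∑ λ(n)²` would be at
most `max |λ(n)| · |∑ λ(n)| ≪ x^ε · x^{3/5+ε}`, which is `o(x^r)`. So every such interval contains
a sign change. Placing `≍ x^{1-r}` disjoint intervals of length `x^r` in `[x/2, x]` gives as many
sign changes up to `x`.
-/

open scoped Classical

open Finset Filter Real

lemma sum_sq_le_mul_abs_sum_of_nonneg {ι : Type*} {s : Finset ι} {f : ι → ℝ} {B : ℝ}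
    (hB : ∀ i ∈ s, |f i| ≤ B) (hf : ∀ i ∈ s, 0 ≤ f i) :
    ∑ i ∈ s, f i ^ 2 ≤ B * |∑ i ∈ s, f i| := by
  rw [abs_of_nonneg (sum_nonneg hf), mul_sum]
  refine sum_le_sum fun i hi => ?_
  rw [sq]
  exact mul_le_mul_of_nonneg_right ((le_abs_self _).trans (hB i hi)) (hf i hi)

lemma exists_pos_and_neg_of_mul_abs_sum_lt_sum_sq {ι : Type*} {s : Finset ι} {f : ι → ℝ}
    {B : ℝ} (hB : ∀ i ∈ s, |f i| ≤ B) (h : B * |∑ i ∈ s, f i| < ∑ i ∈ s, f i ^ 2) :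
    (∃ i ∈ s, 0 < f i) ∧ (∃ i ∈ s, f i < 0) := by
  constructor
  · by_contra! hf
    have := sum_sq_le_mul_abs_sum_of_nonneg (f := fun i => -f i) (by simpa using hB)
      fun i hi => neg_nonneg.2 (hf i hi)
    simp only [neg_sq, sum_neg_distrib, abs_neg] at this
    linarith
  · by_contra! hf
    linarith [sum_sq_le_mul_abs_sum_of_nonneg hB hf]

lemma sum_Ioc_eq_sum_Icc_sub_sum_Icc {M : Type*} [AddCommGroup M] (f : ℕ → M) {m n : ℕ}
    (h : m ≤ n) : ∑ i ∈ Ioc m n, f i = ∑ i ∈ Icc 1 n, f i - ∑ i ∈ Icc 1 m, f i := by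
  rw [eq_sub_iff_add_eq', ← zero_add 1, Icc_add_one_left_eq_Ioc, Icc_add_one_left_eq_Ioc]
  exact sum_Ioc_consecutive f (Nat.zero_le m) h

lemma abs_sub_sub_le_of_abs_sub_le_rpow {F G : ℝ → ℝ} {C β x y w : ℝ} (hβ : 0 ≤ β)
    (hF : ∀ z, 1 ≤ z → |F z - G z| ≤ C * z ^ β) (hx : 1 ≤ x) (hxy : x ≤ y) (hyw : y ≤ w) :
    |(F y - F x) - (G y - G x)| ≤ 2 * C * w ^ β := by
  have hC : 0 ≤ C := by simpa using (abs_nonneg _).trans (hF 1 le_rfl)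
  have hxw : C * x ^ β ≤ C * w ^ β := by gcongr; linarith
  have hyw : C * y ^ β ≤ C * w ^ β := by gcongr; linarith
  calc |(F y - F x) - (G y - G x)| = |(F y - G y) - (F x - G x)| := by ring_nf
    _ ≤ |F y - G y| + |F x - G x| := abs_sub _ _
    _ ≤ 2 * C * w ^ β := by linarith [hF y (hx.trans hxy), hF x hx]

lemma eventually_mul_rpow_lt (K : ℝ) {a r c : ℝ} (har : a < r) (hc : 0 < c) :
    ∀ᶠ x : ℝ in atTop, K * (2 * x) ^ a < c * x ^ r := by
  filter_upwards [(tendsto_rpow_atTop (sub_pos.2 har)).eventually_gt_atTop (2 ^ a * K / c),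
    eventually_gt_atTop 0] with x hx hx₀
  have hsplit : x ^ r = x ^ (r - a) * x ^ a := by rw [← rpow_add hx₀, sub_add_cancel]
  rw [mul_rpow zero_le_two hx₀.le, hsplit]
  have := (div_lt_iff₀' hc).1 hx
  nlinarith [rpow_pos_of_pos hx₀ a]

theorem eventually_exists_pos_neg_in_short_interval (lam : ℕ → ℝ)
    {α β γ r c C₁ C₂ C₃ : ℝ} (hα : 0 ≤ α) (hβ : 0 ≤ β) (hγ : 0 ≤ γ) (hαβr : α + β < r)
    (hγr : γ < r) (hr : r ≤ 1) (hc : 0 < c)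
    (h₁ : ∀ n : ℕ, 1 ≤ n → |lam n| ≤ C₁ * (n : ℝ) ^ α)
    (h₂ : ∀ x : ℝ, 1 ≤ x → |∑ n ∈ Icc 1 ⌊x⌋₊, lam n| ≤ C₂ * x ^ β)
    (h₃ : ∀ x : ℝ, 1 ≤ x → |∑ n ∈ Icc 1 ⌊x⌋₊, lam n ^ 2 - c * x| ≤ C₃ * x ^ γ) :
    ∀ᶠ x : ℝ in atTop, ∃ m n : ℕ, ((x : ℝ) ≤ m ∧ (m : ℝ) ≤ x + x ^ r) ∧
      ((x : ℝ) ≤ n ∧ (n : ℝ) ≤ x + x ^ r) ∧ 0 < lam m ∧ lam n < 0 := by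
  filter_upwards [eventually_mul_rpow_lt (2 * C₁ * C₂) hαβr (half_pos hc),
    eventually_mul_rpow_lt (2 * C₃) hγr (half_pos hc), eventually_ge_atTop 1]
    with x hx₁ hx₃ hx
  set y := x + x ^ r
  have hxy : x ≤ y := le_add_of_nonneg_right (rpow_nonneg (by linarith) r)
  have hy : y ≤ 2 * x := by
    have : x ^ r ≤ x := by simpa using rpow_le_rpow_of_exponent_le hx hr
    linarith
  set s := Ioc ⌊x⌋₊ ⌊y⌋₊
  have hs : ∀ n ∈ s, (x : ℝ) ≤ n ∧ (n : ℝ) ≤ y := by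
    intro n hn
    rw [mem_Ioc, Nat.floor_lt (by linarith), Nat.le_floor_iff (by linarith)] at hn
    exact ⟨hn.1.le, hn.2⟩
  have hC₁ : 0 ≤ C₁ := by simpa using (abs_nonneg _).trans (h₁ 1 le_rfl)
  have hlam : ∀ n ∈ s, |lam n| ≤ C₁ * (2 * x) ^ α := by
    intro n hn
    obtain ⟨hxn, hny⟩ := hs n hn
    calc |lam n| ≤ C₁ * (n : ℝ) ^ α := h₁ n (Nat.one_le_cast.1 (hx.trans hxn))
      _ ≤ C₁ * (2 * x) ^ α := by gcongr; linarith
  have hsum : |∑ n ∈ s, lam n| ≤ 2 * C₂ * (2 * x) ^ β := by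
    have := abs_sub_sub_le_of_abs_sub_le_rpow (F := fun z => ∑ n ∈ Icc 1 ⌊z⌋₊, lam n)
      (G := fun _ => 0) hβ (by simpa using h₂) hx hxy hy
    rwa [sum_Ioc_eq_sum_Icc_sub_sum_Icc _ (Nat.floor_le_floor hxy), ← sub_zero (_ - _),
      ← sub_self (0 : ℝ)]
  have hsq : c * x ^ r - 2 * C₃ * (2 * x) ^ γ ≤ ∑ n ∈ s, lam n ^ 2 := by
    have := abs_sub_sub_le_of_abs_sub_le_rpow (F := fun z => ∑ n ∈ Icc 1 ⌊z⌋₊, lam n ^ 2)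
      (G := fun z => c * z) hγ h₃ hx hxy hy
    rw [sum_Ioc_eq_sum_Icc_sub_sum_Icc _ (Nat.floor_le_floor hxy)]
    have hcy : c * y - c * x = c * x ^ r := by ring
    linarith [(abs_le.1 this).1]
  obtain ⟨⟨m, hm, hpos⟩, ⟨n, hn, hneg⟩⟩ := exists_pos_and_neg_of_mul_abs_sum_lt_sum_sq hlam <|
    calc C₁ * (2 * x) ^ α * |∑ n ∈ s, lam n| ≤ C₁ * (2 * x) ^ α * (2 * C₂ * (2 * x) ^ β) := by
          gcongr
      _ = 2 * C₁ * C₂ * (2 * x) ^ (α + β) := by rw [rpow_add (by linarith)]; ring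
      _ < c * x ^ r - 2 * C₃ * (2 * x) ^ γ := by linarith
      _ ≤ _ := hsq
  exact ⟨m, n, hs m hm, hs n hn, hpos, hneg⟩

noncomputable def signChangesUpTo (lam : ℕ → ℝ) (x : ℝ) : Finset ℕ :=
  (Icc 1 ⌊x⌋₊).filter fun n => ∃ m : ℕ, n < m ∧ (m : ℝ) ≤ x ∧ lam n * lam m < 0

lemma mem_signChangesUpTo {lam : ℕ → ℝ} {x : ℝ} {a b : ℕ} (ha : 1 ≤ a) (hab : a < b)
    (hb : (b : ℝ) ≤ x) (hlam : lam a * lam b < 0) : a ∈ signChangesUpTo lam x := by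
  simp only [signChangesUpTo, mem_filter, mem_Icc]
  exact ⟨⟨ha, Nat.le_floor ((Nat.cast_le.2 hab.le).trans hb)⟩, b, hab, hb, hlam⟩

lemma exists_mem_signChangesUpTo {lam : ℕ → ℝ} {x t h : ℝ} {m n : ℕ} (ht : 1 ≤ t)
    (hx : t + h ≤ x) (hm : t ≤ m ∧ (m : ℝ) ≤ t + h) (hn : t ≤ n ∧ (n : ℝ) ≤ t + h)
    (hpos : 0 < lam m) (hneg : lam n < 0) :
    ∃ a ∈ signChangesUpTo lam x, t ≤ a ∧ (a : ℝ) ≤ t + h := by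
  rcases lt_or_gt_of_ne (show m ≠ n by rintro rfl; linarith) with hmn | hnm
  · exact ⟨m, mem_signChangesUpTo (Nat.one_le_cast.1 (ht.trans hm.1)) hmn (hn.2.trans hx)
      (mul_neg_of_pos_of_neg hpos hneg), hm⟩
  · exact ⟨n, mem_signChangesUpTo (Nat.one_le_cast.1 (ht.trans hn.1)) hnm (hm.2.trans hx)
      (mul_neg_of_neg_of_pos hneg hpos), hn⟩

lemma le_card_of_forall_exists_mem_Icc {S : Finset ℕ} {t₀ d h : ℝ} {K : ℕ} (hh : 0 ≤ h)
    (hhd : h < d) (hS : ∀ k < K, ∃ a ∈ S, t₀ + k * d ≤ a ∧ (a : ℝ) ≤ t₀ + k * d + h) :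
    K ≤ #S := by
  have hS' : ∀ k, ∃ a : ℕ, k < K → a ∈ S ∧ t₀ + k * d ≤ a ∧ (a : ℝ) ≤ t₀ + k * d + h := by
    intro k
    by_cases hk : k < K
    · obtain ⟨a, ha⟩ := hS k hk
      exact ⟨a, fun _ => ha⟩
    · exact ⟨0, fun h => absurd h hk⟩
  choose g hg using hS'
  have hlt : ∀ i < K, ∀ j < K, i < j → g i < g j := by
    intro i hi j hj hij
    have hij' : ((i : ℝ) + 1) * d ≤ j * d :=
      mul_le_mul_of_nonneg_right (by exact_mod_cast hij) (by linarith)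
    have : (g i : ℝ) < g j := by linarith [(hg i hi).2.2, (hg j hj).2.1]
    exact_mod_cast this
  refine le_card_of_inj_on_range g (fun i hi => (hg i hi).1) fun i hi j hj hij => ?_
  by_contra hne
  rcases lt_or_gt_of_ne hne with h | h
  · exact (hlt i hi j hj h).ne hij
  · exact (hlt j hj i hi h).ne' hij

theorem exists_pos_eventually_mul_rpow_le_card_signChangesUpTo (lam : ℕ → ℝ) {r : ℝ}
    (hr₀ : 0 < r) (hr₁ : r < 1)
    (h : ∀ᶠ x : ℝ in atTop, ∃ m n : ℕ, ((x : ℝ) ≤ m ∧ (m : ℝ) ≤ x + x ^ r) ∧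
      ((x : ℝ) ≤ n ∧ (n : ℝ) ≤ x + x ^ r) ∧ 0 < lam m ∧ lam n < 0) :
    ∃ κ > 0, ∀ᶠ x : ℝ in atTop, κ * x ^ (1 - r) ≤ #(signChangesUpTo lam x) := by
  obtain ⟨X, hX⟩ := eventually_atTop.1 h
  refine ⟨1 / 16, by norm_num, ?_⟩
  filter_upwards [(tendsto_rpow_atTop (sub_pos.2 hr₁)).eventually_ge_atTop 8,
    eventually_ge_atTop (2 * max X 1)] with x hx₈ hxX
  have hx₀ : 0 < x := by linarith [le_max_right X 1]
  have hxr₀ : 0 < x ^ r := rpow_pos_of_pos hx₀ r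
  have hx_eq : x ^ (1 - r) * x ^ r = x := by rw [← rpow_add hx₀, sub_add_cancel, rpow_one]
  have hxr : 8 * x ^ r ≤ x := by nlinarith
  set K := ⌊x ^ (1 - r) / 16⌋₊ + 1
  have hK : x ^ (1 - r) / 16 ≤ K := by exact_mod_cast (Nat.lt_floor_add_one _).le
  rw [one_div_mul_eq_div]
  refine hK.trans <| Nat.cast_le.2 <| le_card_of_forall_exists_mem_Icc (t₀ := x / 2)
    (d := 2 * x ^ r) hxr₀.le (by linarith) fun k hk => ?_
  -- the `k`-th interval `[x/2 + 2k x^r, x/2 + (2k+1) x^r]` lies in `[x/2, x]`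
  set t := x / 2 + k * (2 * x ^ r) with ht
  have hk : (k : ℝ) * x ^ r ≤ x / 16 := by
    have : (k : ℝ) ≤ x ^ (1 - r) / 16 :=
      (Nat.le_floor_iff (by positivity)).1 (Nat.lt_add_one_iff.1 hk)
    nlinarith
  have htX : max X 1 ≤ t := by
    have : 0 ≤ (k : ℝ) * x ^ r := by positivity
    linarith
  have htx : t ≤ x := by linarith
  have htr : t ^ r ≤ x ^ r := rpow_le_rpow (by linarith [le_max_right X 1]) htx hr₀.le
  obtain ⟨m, n, hm, hn, hpos, hneg⟩ := hX t (le_of_max_le_left htX)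
  obtain ⟨a, ha, hta, hat⟩ := exists_mem_signChangesUpTo (x := x) (le_of_max_le_right htX)
    (by linarith) hm hn hpos hneg
  exact ⟨a, ha, hta, by linarith⟩

/-- Sign changes for Hecke eigenvalues of genus 2 Siegel cusp forms (abstracted):
if `λ n ≪_ε n^ε`, `∑_{n≤x} λ n ≪_ε x^(3/5+ε)` and
`∑_{n≤x} λ n ² = c x + O_ε(x^(41/47+ε))` with `c > 0`, then for `41/47 < r < 1`, every
interval `[x, x + x^r]` with `x` large contains a sign change, and the number of sign
changes for `n ≤ x` is `≫ x^(1-r)`. -/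
theorem siegel_sign_changes
    (lam : ℕ → ℝ) (r : ℝ) (hr1 : 41 / 47 < r) (hr2 : r < 1)
    (h1 : ∀ ε : ℝ, 0 < ε → ∃ C : ℝ, ∀ n : ℕ, 1 ≤ n → |lam n| ≤ C * (n : ℝ) ^ ε)
    (h2 : ∀ ε : ℝ, 0 < ε → ∃ C : ℝ, ∀ x : ℝ, 1 ≤ x →
      |∑ n ∈ Finset.Icc 1 ⌊x⌋₊, lam n| ≤ C * x ^ (3 / 5 + ε))
    (h3 : ∃ c : ℝ, 0 < c ∧ ∀ ε : ℝ, 0 < ε → ∃ C : ℝ, ∀ x : ℝ, 1 ≤ x →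
      |(∑ n ∈ Finset.Icc 1 ⌊x⌋₊, (lam n) ^ 2) - c * x| ≤ C * x ^ (41 / 47 + ε)) :
    (∃ X : ℝ, ∀ x : ℝ, X ≤ x →
      ∃ m n : ℕ, ((x : ℝ) ≤ m ∧ (m : ℝ) ≤ x + x ^ r) ∧
        ((x : ℝ) ≤ n ∧ (n : ℝ) ≤ x + x ^ r) ∧ 0 < lam m ∧ lam n < 0) ∧
    (∃ κ : ℝ, 0 < κ ∧ ∃ X : ℝ, ∀ x : ℝ, X ≤ x →
      κ * x ^ (1 - r) ≤
        (((Finset.Icc 1 ⌊x⌋₊).filter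
          (fun n => ∃ m : ℕ, n < m ∧ (m : ℝ) ≤ x ∧ lam n * lam m < 0)).card : ℝ)) := by
  obtain ⟨c, hc, h3⟩ := h3
  obtain ⟨ε, hε, hαβ, hγ⟩ : ∃ ε > 0, ε + (3 / 5 + ε) < r ∧ 41 / 47 + ε < r :=
    ⟨(r - 41 / 47) / 4, by linarith, by linarith, by linarith⟩
  obtain ⟨C₁, hC₁⟩ := h1 ε hε
  obtain ⟨C₂, hC₂⟩ := h2 ε hε
  obtain ⟨C₃, hC₃⟩ := h3 ε hε
  have hshort := eventually_exists_pos_neg_in_short_interval lam (α := ε) hε.le (by positivity)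
    (by positivity) hαβ hγ hr2.le hc hC₁ hC₂ hC₃
  obtain ⟨κ, hκ, hcount⟩ :=
    exists_pos_eventually_mul_rpow_le_card_signChangesUpTo lam (by linarith) hr2 hshort
  exact ⟨hshort.exists_forall_of_atTop, κ, hκ, hcount.exists_forall_of_atTop⟩
end

section
/- Let (a(n)) be a sequence of real numbers with a(n) ≪_ε n^ε for all ε > 0, ∑_{n≤x} a(n) ≪ x^{β} with β < 1, and ∑_{n≤x} a(n)² = cx + O(x^γ) with c > 0 and γ < 1. Then a(n) > 0 for infinitely many n and a(n) < 0 for infinitely many n. -/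
/-!
If `a n ≥ 0` for all large `n`, then on the tail `a n ^ 2 ≤ (max_{n ≤ x} a n) · a n`, so
`∑_{n ≤ x} a n ^ 2 ≪ 1 + x ^ ε (|∑_{n ≤ x} a n| + 1) ≪ x ^ (ε + β) + x ^ ε = o(x)` for small `ε`,
which contradicts `∑_{n ≤ x} a n ^ 2 = c x + o(x)` with `c ≠ 0`. Applying this to `a` and `-a`
gives both signs infinitely often.
-/

open Finset Filter Asymptotics

theorem Finset.sum_sq_le_mul_sum {ι R : Type*} [CommSemiring R] [PartialOrder R]
    [IsOrderedRing R] {s : Finset ι} {f : ι → R} {B : R} (h0 : ∀ i ∈ s, 0 ≤ f i)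
    (hB : ∀ i ∈ s, f i ≤ B) : ∑ i ∈ s, f i ^ 2 ≤ B * ∑ i ∈ s, f i := by
  rw [mul_sum]
  exact sum_le_sum fun i hi => by
    rw [sq]; exact mul_le_mul_of_nonneg_right (hB i hi) (h0 i hi)

theorem Finset.sum_Icc_one_add_sum_Ioc {M : Type*} [AddCommMonoid M] (f : ℕ → M) {N m : ℕ}
    (hNm : N ≤ m) : ∑ n ∈ Icc 1 N, f n + ∑ n ∈ Ioc N m, f n = ∑ n ∈ Icc 1 m, f n := by
  have hIcc : ∀ k, Icc 1 k = Ioc 0 k := Icc_add_one_left_eq_Ioc 0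
  rw [hIcc, hIcc]
  exact sum_Ioc_consecutive f N.zero_le hNm

theorem Real.isLittleO_rpow_id_atTop {s : ℝ} (hs : s < 1) :
    (fun x : ℝ => x ^ s) =o[atTop] id := by
  refine (isLittleO_iff_tendsto' ((eventually_gt_atTop 0).mono fun x hx h => absurd h hx.ne')).2 ?_
  refine (tendsto_rpow_neg_atTop (sub_pos.2 hs)).congr' ?_
  filter_upwards [eventually_gt_atTop 0] with x hx
  rw [neg_sub, Real.rpow_sub_one hx.ne']

theorem isBigO_rpow_of_forall_abs_le {f : ℝ → ℝ} {β : ℝ}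
    (h : ∃ C, ∀ x, 1 ≤ x → |f x| ≤ C * x ^ β) : f =O[atTop] fun x => x ^ β := by
  obtain ⟨C, hC⟩ := h
  refine IsBigO.of_bound C ?_
  filter_upwards [eventually_ge_atTop 1] with x hx
  rw [Real.norm_eq_abs, Real.norm_of_nonneg (by positivity)]
  exact hC x hx

theorem eq_zero_of_isLittleO_of_sub_mul_isBigO_rpow {f : ℝ → ℝ} {c γ : ℝ} (hγ : γ < 1)
    (hf : f =o[atTop] id) (hfc : (fun x => f x - c * x) =O[atTop] fun x => x ^ γ) :
    c = 0 := by
  by_contra hc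
  have hcx : (fun x : ℝ => c * x) =o[atTop] id :=
    (hf.sub (hfc.trans_isLittleO (Real.isLittleO_rpow_id_atTop hγ))).congr_left fun x => by ring
  exact isLittleO_irrefl (eventually_ne_atTop 0).frequently
    ((isLittleO_const_mul_left_iff hc).1 hcx)

section SignChanges

variable {a : ℕ → ℝ} {β ε C : ℝ}

theorem sum_sq_Icc_floor_le (hε : 0 ≤ ε) (hC : 0 ≤ C)
    (ha : ∀ n, 1 ≤ n → |a n| ≤ C * (n : ℝ) ^ ε) {N : ℕ} (hN : ∀ n, N ≤ n → 0 ≤ a n)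
    {x : ℝ} (hx : (N : ℝ) ≤ x) :
    ∑ n ∈ Icc 1 ⌊x⌋₊, a n ^ 2 ≤ ∑ n ∈ Icc 1 N, a n ^ 2
      + C * x ^ ε * (|∑ n ∈ Icc 1 ⌊x⌋₊, a n| + |∑ n ∈ Icc 1 N, a n|) := by
  have hx0 : 0 ≤ x := N.cast_nonneg.trans hx
  have hNm : N ≤ ⌊x⌋₊ := Nat.le_floor hx
  have hbound : ∀ n ∈ Ioc N ⌊x⌋₊, a n ≤ C * x ^ ε := fun n hn => by
    obtain ⟨hNn, hnx⟩ := mem_Ioc.1 hn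
    calc a n ≤ |a n| := le_abs_self _
      _ ≤ C * (n : ℝ) ^ ε := ha n (Nat.one_le_of_lt hNn)
      _ ≤ C * x ^ ε := by
        gcongr
        exact (Nat.cast_le.2 hnx).trans (Nat.floor_le hx0)
  have htail := sum_sq_le_mul_sum (fun n hn => hN n (mem_Ioc.1 hn).1.le) hbound
  rw [← sum_Icc_one_add_sum_Ioc _ hNm, ← sum_Icc_one_add_sum_Ioc _ hNm]
  have hsum : ∑ n ∈ Ioc N ⌊x⌋₊, a n
      ≤ |∑ n ∈ Icc 1 N, a n + ∑ n ∈ Ioc N ⌊x⌋₊, a n| + |∑ n ∈ Icc 1 N, a n| := by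
    linarith [le_abs_self (∑ n ∈ Icc 1 N, a n + ∑ n ∈ Ioc N ⌊x⌋₊, a n),
      neg_abs_le (∑ n ∈ Icc 1 N, a n)]
  have hB : 0 ≤ C * x ^ ε := by positivity
  linarith [mul_le_mul_of_nonneg_left hsum hB]

theorem isLittleO_sum_sq_of_eventually_nonneg (hε : 0 ≤ ε) (hεβ : ε + β < 1) (hε1 : ε < 1)
    (ha : ∀ n, 1 ≤ n → |a n| ≤ C * (n : ℝ) ^ ε)
    (hS : (fun x : ℝ => ∑ n ∈ Icc 1 ⌊x⌋₊, a n) =O[atTop] fun x => x ^ β)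
    (hpos : ∀ᶠ n in atTop, 0 ≤ a n) :
    (fun x : ℝ => ∑ n ∈ Icc 1 ⌊x⌋₊, a n ^ 2) =o[atTop] id := by
  obtain ⟨N, hN⟩ := eventually_atTop.1 hpos
  have hC : 0 ≤ C := by simpa using (abs_nonneg _).trans (ha 1 le_rfl)
  have hmajorant : (fun x : ℝ => ∑ n ∈ Icc 1 N, a n ^ 2
      + C * x ^ ε * (|∑ n ∈ Icc 1 ⌊x⌋₊, a n| + |∑ n ∈ Icc 1 N, a n|)) =o[atTop] id := by
    have hpartial : (fun x : ℝ => x ^ ε * |∑ n ∈ Icc 1 ⌊x⌋₊, a n|) =o[atTop] id :=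
      ((isBigO_refl _ _).mul_atTop_rpow_of_isBigO_rpow ε β _ hS.abs_left le_rfl).trans_isLittleO
        (Real.isLittleO_rpow_id_atTop hεβ)
    refine (isLittleO_const_id_atTop _).add ?_
    exact ((hpartial.const_mul_left C).add ((Real.isLittleO_rpow_id_atTop hε1).const_mul_left
      (C * |∑ n ∈ Icc 1 N, a n|))).congr_left fun x => by ring
  refine (IsBigO.of_bound' ?_).trans_isLittleO hmajorant
  filter_upwards [eventually_ge_atTop (N : ℝ)] with x hx
  rw [Real.norm_of_nonneg (sum_nonneg fun n _ => sq_nonneg _)]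
  exact (sum_sq_Icc_floor_le hε hC ha hN hx).trans (le_abs_self _)

theorem frequently_neg_of_sum_sq_sub_isBigO {γ c : ℝ} (hc : c ≠ 0) (hγ : γ < 1) (hε : 0 ≤ ε)
    (hεβ : ε + β < 1) (hε1 : ε < 1) (ha : ∀ n, 1 ≤ n → |a n| ≤ C * (n : ℝ) ^ ε)
    (hS : (fun x : ℝ => ∑ n ∈ Icc 1 ⌊x⌋₊, a n) =O[atTop] fun x => x ^ β)
    (hQ : (fun x : ℝ => ∑ n ∈ Icc 1 ⌊x⌋₊, a n ^ 2 - c * x) =O[atTop] fun x => x ^ γ) :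
    ∃ᶠ n in atTop, a n < 0 := by
  by_contra h
  have hpos : ∀ᶠ n in atTop, 0 ≤ a n := (not_frequently.1 h).mono fun _ => le_of_not_gt
  exact hc <| eq_zero_of_isLittleO_of_sub_mul_isBigO_rpow hγ
    (isLittleO_sum_sq_of_eventually_nonneg hε hεβ hε1 ha hS hpos) hQ

end SignChanges

/-- Qualitative sign-change corollary: if `a n ≪_ε n^ε`, `∑_{n≤x} a n ≪ x^β` with
`β < 1`, and `∑_{n≤x} a n ² = c x + O(x^γ)` with `c > 0`, `γ < 1`, then `a n > 0` for
infinitely many `n` and `a n < 0` for infinitely many `n`. -/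
theorem infinitely_many_sign_changes
    (a : ℕ → ℝ) (β γ c : ℝ) (hβ : β < 1) (hγ : γ < 1) (hc : 0 < c)
    (h1 : ∀ ε : ℝ, 0 < ε → ∃ C : ℝ, ∀ n : ℕ, 1 ≤ n → |a n| ≤ C * (n : ℝ) ^ ε)
    (h2 : ∃ C : ℝ, ∀ x : ℝ, 1 ≤ x → |∑ n ∈ Finset.Icc 1 ⌊x⌋₊, a n| ≤ C * x ^ β)
    (h3 : ∃ C : ℝ, ∀ x : ℝ, 1 ≤ x →
      |(∑ n ∈ Finset.Icc 1 ⌊x⌋₊, (a n) ^ 2) - c * x| ≤ C * x ^ γ) :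
    {n : ℕ | 0 < a n}.Infinite ∧ {n : ℕ | a n < 0}.Infinite := by
  have hβ₀ : max β 0 < 1 := max_lt hβ one_pos
  have hβ_le := le_max_left β 0
  have h0_le := le_max_right β 0
  obtain ⟨C, hC⟩ := h1 ((1 - max β 0) / 2) (by linarith)
  have hS := isBigO_rpow_of_forall_abs_le h2
  have hQ := isBigO_rpow_of_forall_abs_le h3
  have key := fun {b : ℕ → ℝ} => frequently_neg_of_sum_sq_sub_isBigO (a := b) (β := β)
    (ε := (1 - max β 0) / 2) (C := C) hc.ne' hγ (by linarith) (by linarith) (by linarith)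
  refine ⟨Nat.frequently_atTop_iff_infinite.1 ?_, Nat.frequently_atTop_iff_infinite.1 ?_⟩
  · simpa using key (b := fun n => -a n) (by simpa using hC)
      (by simpa only [sum_neg_distrib] using hS.neg_left) (by simpa only [neg_sq] using hQ)
  · exact key hC hS hQ
end
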